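/- arXiv:cs/0609162 — 9 statements merged into one kernel-verified Lean document; each statement's English description precedes it below -/
import Mathlib

section
/- For a ≥ 2, the i-th element (in increasing order, starting at index 0) of the numerical semigroup ⟨a, a+1⟩ equals a*x + y where i = x(x+1)/2 + y with 0 ≤ y ≤ x, whenever i ≤ a(a-1)/2; and equals i + a(a-1)/2 whenever i ≥ a(a-1)/2. -/
def Lam (a : ℕ) : Set ℕ := {n | ∃ i j : ℕ, n = i * a + j * (a + 1)}

lemma mem_Lam_of (a x y : ℕ) (h : y ≤ x) : a * x + y ∈ Lam a := by
  refine ⟨x - y, y, ?_⟩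
  have h1 : (x - y) * a + y * a = x * a := by
    rw [← Nat.add_mul]; congr 1; omega
  have h2 : y * (a + 1) = y * a + y := by ring
  have h3 : a * x = x * a := Nat.mul_comm _ _
  omega

lemma not_mem_Lam (a x r : ℕ) (hxr : x < r) (hra : r < a) : a * x + r ∉ Lam a := by
  rintro ⟨i, j, h⟩
  have ha : 0 < a := by omega
  have hj := Nat.div_add_mod j a
  have h1 : a * x + r = a * (i + j + j / a) + j % a := by
    calc a * x + r = i * a + j * (a + 1) := h
      _ = a * (i + j) + j := by ring
      _ = a * (i + j) + (a * (j / a) + j % a) := by rw [hj]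
      _ = a * (i + j + j / a) + j % a := by ring
  have e1 : (a * x + r) % a = r := by rw [Nat.mul_add_mod, Nat.mod_eq_of_lt hra]
  have e2 : (a * (i + j + j / a) + j % a) % a = j % a := by
    rw [Nat.mul_add_mod, Nat.mod_eq_of_lt (Nat.mod_lt _ ha)]
  have hr : r = j % a := by
    have hc := congrArg (fun t => t % a) h1
    rw [e1, e2] at hc
    exact hc
  have d1 : (a * x + r) / a = x := by
    rw [Nat.mul_add_div ha, Nat.div_eq_of_lt hra]; omega
  have d2 : (a * (i + j + j / a) + j % a) / a = i + j + j / a := by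
    rw [Nat.mul_add_div ha, Nat.div_eq_of_lt (Nat.mod_lt _ ha)]; omega
  have hx : x = i + j + j / a := by
    have hc := congrArg (fun t => t / a) h1
    rw [d1, d2] at hc
    exact hc
  have hjm : j % a ≤ j := Nat.mod_le _ _
  clear h1 e1 e2 d1 d2 hj h
  generalize j / a = q at hx
  generalize j % a = s at hr hjm
  omega

lemma tri_succ (x : ℕ) : (x + 1) * (x + 2) / 2 = x * (x + 1) / 2 + (x + 1) := by
  have h : (x + 1) * (x + 2) = x * (x + 1) + 2 * (x + 1) := by ring
  omega

lemma count_row (a : ℕ) (ha : 2 ≤ a) [DecidablePred (· ∈ Lam a)] :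
    ∀ x, x < a → ∀ r, r ≤ a →
      Nat.count (· ∈ Lam a) (a * x + r) = x * (x + 1) / 2 + min r (x + 1) := by
  intro x
  induction x with
  | zero =>
    intro _ r
    induction r with
    | zero => intro _; simp
    | succ r ih =>
      intro hr
      have e : a * 0 + (r + 1) = (a * 0 + r) + 1 := by ring
      rw [e, Nat.count_succ]
      rcases Nat.eq_zero_or_pos r with hr0 | hr0
      · subst hr0
        rw [if_pos (by simpa using mem_Lam_of a 0 0 le_rfl)]
        simp
      · rw [if_neg (not_mem_Lam a 0 r hr0 (by omega))]
        rw [ih (by omega)]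
        omega
  | succ x ihx =>
    intro hx r
    induction r with
    | zero =>
      intro _
      have e : a * (x + 1) + 0 = a * x + a := by ring
      rw [e, ihx (by omega) a le_rfl]
      have h1 : min a (x + 1) = x + 1 := by omega
      rw [h1, tri_succ]
      omega
    | succ r ihr =>
      intro hr
      have e : a * (x + 1) + (r + 1) = (a * (x + 1) + r) + 1 := by ring
      rw [e, Nat.count_succ, ihr (by omega)]
      rcases le_or_gt r (x + 1) with hle | hlt
      · rw [if_pos (mem_Lam_of a (x + 1) r hle)]
        omega
      · rw [if_neg (not_mem_Lam a (x + 1) r hlt (by omega))]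
        omega

lemma mem_Lam_tail (a : ℕ) (ha : 2 ≤ a) (i : ℕ) : a * (a - 1) + i ∈ Lam a := by
  have ha' : 0 < a := by omega
  have hd := Nat.div_add_mod i a
  have e : a * (a - 1) + i = a * (a - 1 + i / a) + i % a := by
    rw [Nat.mul_add]; omega
  rw [e]
  refine mem_Lam_of a (a - 1 + i / a) (i % a) ?_
  have h1 : i % a < a := Nat.mod_lt i ha'
  calc i % a ≤ a - 1 := by omega
    _ ≤ a - 1 + i / a := Nat.le_add_right _ _

lemma count_tail (a : ℕ) (ha : 2 ≤ a) [DecidablePred (· ∈ Lam a)] :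
    ∀ i, Nat.count (· ∈ Lam a) (a * (a - 1) + i) = a * (a - 1) / 2 + i := by
  intro i
  induction i with
  | zero =>
    have h := count_row a ha (a - 1) (by omega) 0 (by omega)
    have e : a - 1 + 1 = a := by omega
    rw [e] at h
    rw [h]
    have : (a - 1) * a = a * (a - 1) := Nat.mul_comm _ _
    omega
  | succ i ih =>
    have e : a * (a - 1) + (i + 1) = (a * (a - 1) + i) + 1 := by ring
    rw [e, Nat.count_succ, ih, if_pos (mem_Lam_tail a ha i)]
    omega

lemma two_mul_tri (a : ℕ) (ha : 2 ≤ a) : 2 * (a * (a - 1) / 2) = a * (a - 1) := by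
  have h : Even ((a - 1) * (a - 1 + 1)) := Nat.even_mul_succ_self (a - 1)
  have e : a - 1 + 1 = a := by omega
  rw [e] at h
  have hc : (a - 1) * a = a * (a - 1) := Nat.mul_comm _ _
  obtain ⟨k, hk⟩ := h
  omega

theorem stmt6 (a : ℕ) (ha : 2 ≤ a) :
    (∀ x y : ℕ, y ≤ x → x * (x + 1) / 2 + y ≤ a * (a - 1) / 2 →
      Nat.nth (fun n => n ∈ Lam a) (x * (x + 1) / 2 + y) = a * x + y) ∧
    (∀ i : ℕ, a * (a - 1) / 2 ≤ i →
      Nat.nth (fun n => n ∈ Lam a) i = i + a * (a - 1) / 2) := by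
  classical
  constructor
  · intro x y hyx hle
    have hx : x < a := by
      by_contra hcon
      push_neg at hcon
      have h1 : a * (a + 1) ≤ x * (x + 1) := Nat.mul_le_mul hcon (by omega)
      have h2 : a * (a + 1) = a * (a - 1) + 2 * a := by
        have e : a - 1 + 2 = a + 1 := by omega
        calc a * (a + 1) = a * (a - 1 + 2) := by rw [e]
          _ = a * (a - 1) + 2 * a := by ring
      omega
    have hm : a * x + y ∈ Lam a := mem_Lam_of a x y hyx
    have hc := count_row a ha x hx y (by omega)
    rw [show min y (x + 1) = y from by omega] at hc
    have hn := Nat.nth_count (p := fun n => n ∈ Lam a) hm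
    rw [hc] at hn
    exact hn
  · intro i hi
    have h2c := two_mul_tri a ha
    have hc := count_tail a ha (i - a * (a - 1) / 2)
    rw [show a * (a - 1) / 2 + (i - a * (a - 1) / 2) = i from by omega] at hc
    have hm := mem_Lam_tail a ha (i - a * (a - 1) / 2)
    have hn := Nat.nth_count (p := fun n => n ∈ Lam a) hm
    rw [hc] at hn
    rw [hn]
    omega
end

section
/- For a ≥ 2 and an element l of ⟨a, a+1⟩ with l = a*x + y and 0 ≤ y ≤ x, the representation is unique among representations l = a*x' + y' with 0 ≤ y' ≤ x' if and only if x - a ≤ y ≤ a - 1 (where x - a ≤ y is automatic when x < a). -/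
/-! Lowering the quotient part by one raises the remainder part by `a`, so two representations
`a * x + y = a * x' + y'` with `x' < x` force `y + a ≤ y'`. Thus `(x + 1, y - a)` is a rival representation
when `a ≤ y`, and `(x - 1, y + a)` is one when `y + a < x`. Conversely, if `y < a` no rival has a larger
quotient part, and if also `x ≤ y + a` a rival with smaller quotient part `x'` would have `y' ≥ x > x'`. -/

theorem add_le_of_mul_add_eq_of_lt {a x y x' y' : ℕ} (h : a * x + y = a * x' + y') (hlt : x' < x) :
    y + a ≤ y' := by
  have : a * (x' + 1) ≤ a * x := Nat.mul_le_mul_left a hlt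
  rw [mul_add_one] at this
  omega

theorem eq_of_mul_add_eq {a x y x' y' : ℕ} (hya : y < a) (hxy : x ≤ y + a) (hy' : y' ≤ x')
    (h : a * x + y = a * x' + y') : x' = x ∧ y' = y := by
  rcases lt_trichotomy x' x with hlt | rfl | hgt
  · have := add_le_of_mul_add_eq_of_lt h hlt
    omega
  · exact ⟨rfl, by omega⟩
  · have := add_le_of_mul_add_eq_of_lt h.symm hgt
    omega

theorem stmt7_general (a x y : ℕ) (hyx : y ≤ x) :
    (∀ x' y' : ℕ, y' ≤ x' → a * x + y = a * x' + y' → x' = x ∧ y' = y) ↔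
      ((x : ℤ) - a ≤ y ∧ (y : ℤ) ≤ a - 1) := by
  constructor
  · intro huniq
    constructor
    · by_contra! hxy
      obtain ⟨x₀, rfl⟩ : ∃ x₀, x = x₀ + 1 := ⟨x - 1, by omega⟩
      have := huniq x₀ (y + a) (by omega) (by ring)
      omega
    · by_contra! hya
      obtain ⟨y₀, rfl⟩ : ∃ y₀, y = y₀ + a := ⟨y - a, by omega⟩
      have := huniq (x + 1) y₀ (by omega) (by ring)
      omega
  · rintro ⟨hxy, hya⟩ x' y' hy' h
    exact eq_of_mul_add_eq (by omega) (by omega) hy' h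

theorem stmt7 (a x y : ℕ) (ha : 2 ≤ a) (hyx : y ≤ x) :
    (∀ x' y' : ℕ, y' ≤ x' → a * x + y = a * x' + y' → x' = x ∧ y' = y) ↔
      ((x : ℤ) - a ≤ y ∧ (y : ℤ) ≤ a - 1) :=
  stmt7_general a x y hyx
end

section
/- For a ≥ 2, an element l = a*x + y of ⟨a, a+1⟩ with 0 ≤ y ≤ x satisfies l ∈ Λ^{x+1} if and only if y ≥ a, and l ∈ Λ^{x-1} (for x ≥ 1) if and only if y ≤ x - a - 1. -/
/-- The elements of `⟨a, a+1⟩` expressible with quotient part `x`. -/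
def LamX (a x : ℕ) : Set ℕ := {n | ∃ y ≤ x, n = a * x + y}

theorem lamX_eq_Icc (a x : ℕ) : LamX a x = Set.Icc (a * x) ((a + 1) * x) := by
  ext n
  simp only [LamX, Set.mem_ofPred_eq, Set.mem_Icc, add_one_mul]
  constructor
  · rintro ⟨y, hy, rfl⟩
    omega
  · rintro ⟨hlo, hhi⟩
    exact ⟨n - a * x, by omega, by omega⟩

theorem add_mem_lamX_succ_iff {a x y : ℕ} (hyx : y ≤ x) :
    a * x + y ∈ LamX a (x + 1) ↔ a ≤ y := by
  rw [lamX_eq_Icc, Set.mem_Icc]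
  simp only [mul_add_one, add_one_mul]
  omega

theorem mul_succ_add_mem_lamX_iff {a x y : ℕ} :
    a * (x + 1) + y ∈ LamX a x ↔ y + a ≤ x := by
  rw [lamX_eq_Icc, Set.mem_Icc]
  simp only [mul_add_one, add_one_mul]
  omega

theorem stmt8_general (a x y : ℕ) (hyx : y ≤ x) :
    (a * x + y ∈ LamX a (x + 1) ↔ a ≤ y) ∧
    (1 ≤ x → (a * x + y ∈ LamX a (x - 1) ↔ (y : ℤ) ≤ (x : ℤ) - a - 1)) := by
  refine ⟨add_mem_lamX_succ_iff hyx, fun hx => ?_⟩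
  obtain ⟨x, rfl⟩ : ∃ x', x = x' + 1 := ⟨x - 1, by omega⟩
  rw [Nat.add_sub_cancel, mul_succ_add_mem_lamX_iff]
  push_cast
  omega

theorem stmt8 (a x y : ℕ) (ha : 2 ≤ a) (hyx : y ≤ x) :
    (a * x + y ∈ LamX a (x + 1) ↔ a ≤ y) ∧
    (1 ≤ x → (a * x + y ∈ LamX a (x - 1) ↔ (y : ℤ) ≤ (x : ℤ) - a - 1)) :=
  stmt8_general a x y hyx
end

section
/- Let a ≥ 2 and let l = a*x + y be an element of ⟨a, a+1⟩ with quotient x and remainder y from Euclidean division by a, satisfying x - a ≤ y ≤ a - 1. Then the number of elements m of ⟨a, a+1⟩ such that l - m also lies in ⟨a, a+1⟩ equals (x - y + 1)(y + 1). -/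
/-- `ν(l)`: the number of `m ∈ Λ` such that `l - m ∈ Λ`. -/
noncomputable def nu (a l : ℕ) : ℕ := {m | m ∈ Lam a ∧ ∃ k ∈ Lam a, m + k = l}.ncard

/-!
Writing `n = a q + s` with `0 ≤ s < a`, one has `n = (q - s) a + s (a + 1)`, so `n ∈ Λ` exactly
when `s ≤ q`, and the pair `(q - s, s)` is then the unique representation `n = t a + r (a + 1)`
with `r < a`. If `m, k ∈ Λ` and `m + k = l`, adding the remainders of `m` and `k` cannot carry:
a carry would force `x ≥ y + a + 1`. Hence the divisors of `l` are exactly the `t a + r (a + 1)`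
with `t ≤ x - y` and `r ≤ y`, all distinct, and there are `(x - y + 1)(y + 1)` of them.
-/

namespace Lam

variable {a : ℕ}

lemma mod_eq_of_lt {t r : ℕ} (hr : r < a) : (t * a + r * (a + 1)) % a = r := by
  rw [show t * a + r * (a + 1) = r + a * (t + r) by ring, Nat.add_mul_mod_self_left,
    Nat.mod_eq_of_lt hr]

lemma div_eq_of_lt {t r : ℕ} (hr : r < a) : (t * a + r * (a + 1)) / a = t + r := by
  have ha : 0 < a := by omega
  rw [show t * a + r * (a + 1) = r + a * (t + r) by ring, Nat.add_mul_div_left _ _ ha,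
    Nat.div_eq_of_lt hr, zero_add]

lemma injOn_snd_lt : Set.InjOn (fun p : ℕ × ℕ => p.1 * a + p.2 * (a + 1)) {p | p.2 < a} := by
  rintro ⟨t, r⟩ (hr : r < a) ⟨t', r'⟩ (hr' : r' < a) h
  have hmod := congrArg (· % a) h
  have hdiv := congrArg (· / a) h
  simp only [mod_eq_of_lt hr, mod_eq_of_lt hr', div_eq_of_lt hr, div_eq_of_lt hr'] at hmod hdiv
  ext <;> simp <;> omega

lemma eq_of_mod_le_div {n : ℕ} (h : n % a ≤ n / a) :
    n = (n / a - n % a) * a + n % a * (a + 1) := by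
  have := Nat.div_add_mod n a
  zify [h] at this ⊢
  linarith

lemma mem_iff_mod_le_div (ha : 0 < a) {n : ℕ} : n ∈ Lam a ↔ n % a ≤ n / a := by
  constructor
  · rintro ⟨i, j, rfl⟩
    rw [show i * a + j * (a + 1) = (i + (a + 1) * (j / a)) * a + j % a * (a + 1) by
      nth_rw 1 [← Nat.div_add_mod j a]; ring,
      mod_eq_of_lt (Nat.mod_lt j ha), div_eq_of_lt (Nat.mod_lt j ha)]
    omega
  · exact fun h => ⟨_, _, eq_of_mod_le_div h⟩

lemma mod_add_mod_lt {m k : ℕ} (ha : 0 < a) (hm : m ∈ Lam a) (hk : k ∈ Lam a)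
    (hcarry : (m + k) / a ≤ (m + k) % a + a) : m % a + k % a < a := by
  by_contra! hle
  have hdiv := Nat.add_div_eq_of_le_mod_add_mod hle ha
  have hmod := Nat.add_mod_add_of_le_add_mod hle
  have := (mem_iff_mod_le_div ha).1 hm
  have := (mem_iff_mod_le_div ha).1 hk
  omega

lemma summands_eq_image {l : ℕ} (ha : 0 < a) (hl : l ∈ Lam a) (hcarry : l / a ≤ l % a + a) :
    {m | m ∈ Lam a ∧ ∃ k ∈ Lam a, m + k = l} =
      ((Finset.Iic (l / a - l % a) ×ˢ Finset.Iic (l % a)).image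
        fun p : ℕ × ℕ => p.1 * a + p.2 * (a + 1) : Set ℕ) := by
  have hyx := (mem_iff_mod_le_div ha).1 hl
  ext m
  simp only [Set.mem_ofPred_eq, Finset.coe_image, Finset.coe_product, Finset.coe_Iic,
    Set.mem_image, Set.mem_prod, Set.mem_Iic, Prod.exists]
  constructor
  · rintro ⟨hm, k, hk, rfl⟩
    have hlt := mod_add_mod_lt ha hm hk hcarry
    have hmod := Nat.add_mod_of_add_mod_lt hlt
    have hdiv := Nat.add_div_eq_of_add_mod_lt hlt
    have hmLam := (mem_iff_mod_le_div ha).1 hm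
    have hkLam := (mem_iff_mod_le_div ha).1 hk
    exact ⟨m / a - m % a, m % a, ⟨by omega, by omega⟩, (eq_of_mod_le_div hmLam).symm⟩
  · rintro ⟨t, r, ⟨ht, hr⟩, rfl⟩
    refine ⟨⟨t, r, rfl⟩, _, ⟨l / a - l % a - t, l % a - r, rfl⟩, ?_⟩
    conv_rhs => rw [eq_of_mod_le_div hyx]
    zify [ht, hr, hyx]
    ring

end Lam

theorem stmt9_general (a l : ℕ) (ha : 2 ≤ a) (hl : l ∈ Lam a)
    (h1 : (l / a : ℤ) - a ≤ l % a) :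
    nu a l = (l / a - l % a + 1) * (l % a + 1) := by
  have ha0 : 0 < a := by omega
  have hcarry : l / a ≤ l % a + a := by
    rw [← Int.natCast_div, ← Int.natCast_mod] at h1
    omega
  have hinj : Set.InjOn (fun p : ℕ × ℕ => p.1 * a + p.2 * (a + 1))
      ↑(Finset.Iic (l / a - l % a) ×ˢ Finset.Iic (l % a)) :=
    Lam.injOn_snd_lt.mono fun p hp =>
      (Finset.mem_Iic.1 (Finset.mem_product.1 hp).2).trans_lt (Nat.mod_lt l ha0)
  rw [nu, Lam.summands_eq_image ha0 hl hcarry, Set.ncard_coe_finset,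
    Finset.card_image_of_injOn hinj, Finset.card_product, Nat.card_Iic, Nat.card_Iic]

theorem stmt9 (a l : ℕ) (ha : 2 ≤ a) (hl : l ∈ Lam a)
    (h1 : (l / a : ℤ) - a ≤ l % a) (h2 : (l % a : ℤ) ≤ a - 1) :
    nu a l = (l / a - l % a + 1) * (l % a + 1) :=
  stmt9_general a l ha hl h1
end

section
/- Let Λ be a numerical semigroup with conductor c and genus g satisfying c = 2g. Then for every element l ∈ Λ with l - c + 1 ∈ Λ (in particular l ≥ c - 1), the number of elements m ∈ Λ with l - m ∈ Λ equals l - c + 1. -/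
theorem stmt10 (Λ : Set ℕ) (h0 : 0 ∈ Λ) (hadd : ∀ m ∈ Λ, ∀ n ∈ Λ, m + n ∈ Λ)
    (hfin : Λᶜ.Finite) (c g : ℕ) (hg : g = Λᶜ.ncard)
    (hc1 : ∀ n, c ≤ n → n ∈ Λ) (hc2 : ∀ c', (∀ n, c' ≤ n → n ∈ Λ) → c ≤ c')
    (hcg : c = 2 * g) (l : ℕ) (hl : l ∈ Λ) (hlc : c ≤ l + 1)
    (hmem : l + 1 - c ∈ Λ) :
    {m | m ∈ Λ ∧ ∃ k ∈ Λ, m + k = l}.ncard = l + 1 - c := by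
  classical
  have hgap_lt : ∀ x, x ∉ Λ → x < c := by
    intro x hx
    by_contra h
    exact hx (hc1 x (le_of_not_gt h))
  have hGcard : hfin.toFinset.card = g := by
    rw [hg]; exact (Set.ncard_eq_toFinset_card _ hfin).symm
  have hcm1 : ∀ x, x ∉ Λ → c - 1 ∉ Λ := by
    intro x hx hc1'
    have hcpos : 0 < c := lt_of_le_of_lt (Nat.zero_le x) (hgap_lt x hx)
    have : c ≤ c - 1 := by
      apply hc2
      intro n hn
      rcases eq_or_lt_of_le hn with h | h
      · rwa [← h]
      · exact hc1 n (by omega)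
    omega
  -- symmetry: gaps correspond to nongaps via x ↦ c - 1 - x
  have hsym : ∀ x, x ∉ Λ → c - 1 - x ∈ Λ := by
    intro x hx
    set A : Finset ℕ := (Finset.range c).filter (fun m => m ∈ Λ) with hA
    set G : Finset ℕ := (Finset.range c).filter (fun m => m ∉ Λ) with hGdef
    have hGeq : G = hfin.toFinset := by
      ext y
      simp only [hGdef, Finset.mem_filter, Finset.mem_range,
        Set.Finite.mem_toFinset, Set.mem_compl_iff]
      constructor
      · rintro ⟨_, h⟩; exact h
      · intro hy; exact ⟨hgap_lt y hy, hy⟩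
    have hGc : G.card = g := by rw [hGeq, hGcard]
    have hAc : A.card = g := by
      have hsum : A.card + G.card = c := by
        rw [hA, hGdef, Finset.card_filter_add_card_filter_not,
          Finset.card_range]
      omega
    have himg : A.image (fun m => c - 1 - m) ⊆ G := by
      intro y hy
      simp only [Finset.mem_image] at hy
      obtain ⟨a, ha, rfl⟩ := hy
      simp only [hA, Finset.mem_filter, Finset.mem_range] at ha
      simp only [hGdef, Finset.mem_filter, Finset.mem_range]
      have hcpos : 0 < c := lt_of_le_of_lt (Nat.zero_le x) (hgap_lt x hx)
      constructor
      · omega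
      · intro hmem'
        have hsum := hadd a ha.2 (c - 1 - a) hmem'
        have heq : a + (c - 1 - a) = c - 1 := by omega
        rw [heq] at hsum
        exact hcm1 x hx hsum
    have hinj : Set.InjOn (fun m => c - 1 - m) A := by
      intro a ha b hb hab
      simp only [hA, Finset.coe_filter, Set.mem_setOf_eq, Finset.mem_range] at ha hb
      have hab' : c - 1 - a = c - 1 - b := hab
      omega
    have hcardimg : (A.image (fun m => c - 1 - m)).card = g := by
      rw [Finset.card_image_of_injOn hinj, hAc]
    have himeq : A.image (fun m => c - 1 - m) = G :=
      Finset.eq_of_subset_of_card_le himg (by rw [hcardimg, hGc])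
    have hxG : x ∈ G := by
      simp only [hGdef, Finset.mem_filter, Finset.mem_range]
      exact ⟨hgap_lt x hx, hx⟩
    rw [← himeq] at hxG
    simp only [Finset.mem_image] at hxG
    obtain ⟨a, ha, hax⟩ := hxG
    simp only [hA, Finset.mem_filter, Finset.mem_range] at ha
    have hxa : c - 1 - x = a := by omega
    rw [hxa]; exact ha.2
  -- key: for m ≤ l, not both m and l - m are gaps
  have hkey : ∀ m, m ≤ l → m ∈ Λ ∨ l - m ∈ Λ := by
    intro m hm
    by_contra h
    push_neg at h
    obtain ⟨h1, h2⟩ := h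
    have hm1 := hsym m h1
    have hm2 := hsym (l - m) h2
    have hmc := hgap_lt m h1
    have hlmc := hgap_lt (l - m) h2
    have hsum := hadd _ (hadd _ hm1 _ hm2) _ hmem
    have heq : (c - 1 - m) + (c - 1 - (l - m)) + (l + 1 - c) = c - 1 := by omega
    rw [heq] at hsum
    exact hcm1 m h1 hsum
  -- counting
  set S : Finset ℕ := (Finset.range (l+1)).filter (fun m => m ∈ Λ ∧ (l - m) ∈ Λ) with hS
  have hset : {m | m ∈ Λ ∧ ∃ k ∈ Λ, m + k = l} = ↑S := by
    ext m
    simp only [Set.mem_setOf_eq, hS, Finset.coe_filter, Finset.mem_range]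
    constructor
    · rintro ⟨hm, k, hk, hmk⟩
      refine ⟨by omega, hm, ?_⟩
      have : l - m = k := by omega
      rwa [this]
    · rintro ⟨hmr, h1, h2⟩
      exact ⟨h1, l - m, h2, by omega⟩
  rw [hset, Set.ncard_coe_finset]
  set B : Finset ℕ := (Finset.range (l+1)).filter (fun m => m ∉ Λ) with hB
  set C : Finset ℕ := (Finset.range (l+1)).filter (fun m => (l - m) ∉ Λ) with hC
  have hBcard : B.card = g := by
    have hBeq : B = hfin.toFinset := by
      ext y
      simp only [hB, Finset.mem_filter, Finset.mem_range,
        Set.Finite.mem_toFinset, Set.mem_compl_iff]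
      constructor
      · rintro ⟨_, h⟩; exact h
      · intro hy; have := hgap_lt y hy; exact ⟨by omega, hy⟩
    rw [hBeq, hGcard]
  have hCcard : C.card = g := by
    have hCc : C.card = hfin.toFinset.card := by
      apply Finset.card_nbij (fun m => l - m)
      · intro m hm
        simp only [hC, Finset.mem_filter, Finset.mem_range] at hm
        simp only [Set.Finite.mem_toFinset, Set.mem_compl_iff]
        simpa using (Finset.mem_filter.mp hm).2
      · intro a ha b hb hab
        simp only [hC, Finset.coe_filter, Set.mem_setOf_eq, Finset.mem_range] at ha hb
        have hab' : l - a = l - b := hab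
        omega
      · intro y hy
        have hy' : y ∉ Λ := by simpa using hy
        have hyc := hgap_lt y hy'
        refine ⟨l - y, ?_, (by omega : l - (l - y) = y)⟩
        have h1 : l - y ∈ C := by
          simp only [hC, Finset.mem_filter, Finset.mem_range]
          refine ⟨by omega, ?_⟩
          have heq2 : l - (l - y) = y := by omega
          rw [heq2]; exact hy'
        exact h1
    rw [hCc, hGcard]
  have hdisjBC : Disjoint B C := by
    rw [Finset.disjoint_left]
    intro m hmB hmC
    simp only [hB, Finset.mem_filter, Finset.mem_range] at hmB
    simp only [hC, Finset.mem_filter, Finset.mem_range] at hmC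
    rcases hkey m (by omega) with h | h
    · exact hmB.2 h
    · exact hmC.2 h
  have hunion : S ∪ (B ∪ C) = Finset.range (l+1) := by
    ext m
    simp only [Finset.mem_union, hS, hB, hC, Finset.mem_filter, Finset.mem_range]
    constructor
    · rintro (h | h | h) <;> exact h.1
    · intro hm
      by_cases h1 : m ∈ Λ
      · by_cases h2 : l - m ∈ Λ
        · exact Or.inl ⟨hm, h1, h2⟩
        · exact Or.inr (Or.inr ⟨hm, h2⟩)
      · exact Or.inr (Or.inl ⟨hm, h1⟩)
  have hdisjS : Disjoint S (B ∪ C) := by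
    rw [Finset.disjoint_left]
    intro m hmS hmBC
    simp only [hS, Finset.mem_filter, Finset.mem_range] at hmS
    simp only [Finset.mem_union, hB, hC, Finset.mem_filter, Finset.mem_range] at hmBC
    rcases hmBC with h | h
    · exact h.2 hmS.2.1
    · exact h.2 hmS.2.2
  have hcard : S.card + (B.card + C.card) = l + 1 := by
    rw [← Finset.card_union_of_disjoint hdisjBC,
      ← Finset.card_union_of_disjoint hdisjS, hunion, Finset.card_range]
  omega
end

section
/- For a ≥ 2 and l ∈ ⟨a, a+1⟩ with Euclidean division l = a*x + y (0 ≤ y < a): if x - a ≤ y ≤ a - 1 then ν(l) = (x - y + 1)(y + 1), and otherwise ν(l) = l - a(a-1) + 1. -/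
/-!
Every `n ∈ Λ` is `a * u + v` with `v < a` and `v ≤ u`; equivalently `n = a * (s + v) + v`
with `s ≥ 0`, `v < a`. Write `l = a * (y + d) + y`. A summand `m = a * (s + v) + v` of `l`
leaves a complement in `Λ` exactly when either no carry occurs in the last digit (`v ≤ y`,
`s ≤ d`) or a carry occurs (`y < v`, `s + a < d`). Counting these pairs gives
`ν(l) = (d + 1)(y + 1) + (d - a)(a - 1 - y)`, and the second term vanishes iff `d ≤ a`.
-/

section

variable {a : ℕ}

lemma eq_and_eq_of_mul_add_eq_mul_add {u v x y : ℕ} (hv : v < a) (hy : y < a)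
    (h : a * u + v = a * x + y) : u = x ∧ v = y := by
  have ha : 0 < a := by omega
  have hmod := congrArg (· % a) h
  have hdiv := congrArg (· / a) h
  simp only [Nat.mul_add_mod, Nat.mod_eq_of_lt hv, Nat.mod_eq_of_lt hy] at hmod
  simp only [Nat.mul_add_div ha, Nat.div_eq_of_lt hv, Nat.div_eq_of_lt hy, Nat.add_zero] at hdiv
  exact ⟨hdiv, hmod⟩

lemma mul_add_add_mul_add_eq_mul_add_iff {u v u' v' x y : ℕ} (hv : v < a) (hv' : v' < a)
    (hy : y < a) :
    a * u + v + (a * u' + v') = a * x + y ↔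
      (v + v' = y ∧ u + u' = x) ∨ (v + v' = y + a ∧ u + u' + 1 = x) := by
  constructor
  · intro h
    rcases lt_or_ge (v + v') a with hc | hc
    · have := eq_and_eq_of_mul_add_eq_mul_add (u := u + u') hc hy (by linarith)
      omega
    · have := eq_and_eq_of_mul_add_eq_mul_add (u := u + u' + 1) (v := v + v' - a) (by omega) hy
        (by zify [hc] at h ⊢; linarith)
      omega
  · rintro (⟨hvy, rfl⟩ | ⟨hvy, rfl⟩) <;> linarith

lemma mem_Lam_iff_mod_le_div (ha : 0 < a) {n : ℕ} : n ∈ Lam a ↔ n % a ≤ n / a := by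
  constructor
  · rintro ⟨i, j, rfl⟩
    have h : i * a + j * (a + 1) = j + (i + j) * a := by ring
    rw [h, Nat.add_mul_div_right _ _ ha, Nat.add_mul_mod_self_right]
    exact (Nat.mod_le j a).trans (le_add_self.trans le_add_self)
  · intro h
    refine ⟨n / a - n % a, n % a, ?_⟩
    have hdm : (a : ℤ) * (n / a) + (n % a) = n := by exact_mod_cast Nat.div_add_mod n a
    zify [h]
    linear_combination -hdm

lemma mul_add_mem_Lam_iff {u v : ℕ} (hv : v < a) : a * u + v ∈ Lam a ↔ v ≤ u := by
  have ha : 0 < a := by omega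
  rw [mem_Lam_iff_mod_le_div ha, Nat.mul_add_mod, Nat.mod_eq_of_lt hv, Nat.mul_add_div ha,
    Nat.div_eq_of_lt hv, Nat.add_zero]

/-- A pair `(s, v)` stands for the summand `a * (s + v) + v` of `a * (y + d) + y`; the two
blocks are the summands without and with a carry in the last base-`a` digit. -/
def summandPairs (a y d : ℕ) : Finset (ℕ × ℕ) :=
  Finset.range (d + 1) ×ˢ Finset.range (y + 1) ∪ Finset.range (d - a) ×ˢ Finset.Ico (y + 1) a

lemma mem_summandPairs {y d : ℕ} {p : ℕ × ℕ} :
    p ∈ summandPairs a y d ↔ p.1 ≤ d ∧ p.2 ≤ y ∨ p.1 + a < d ∧ y < p.2 ∧ p.2 < a := by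
  simp only [summandPairs, Finset.mem_union, Finset.mem_product, Finset.mem_range,
    Finset.mem_Ico]
  omega

lemma card_summandPairs (y d : ℕ) :
    (summandPairs a y d).card = (d + 1) * (y + 1) + (d - a) * (a - (y + 1)) := by
  rw [summandPairs, Finset.card_union_of_disjoint, Finset.card_product, Finset.card_product,
    Finset.card_range, Finset.card_range, Finset.card_range, Nat.card_Ico]
  rw [Finset.disjoint_left]
  simp only [Finset.mem_product, Finset.mem_range, Finset.mem_Ico]
  omega

lemma summands_eq_image_summandPairs {y d : ℕ} (hy : y < a) :
    {m | m ∈ Lam a ∧ ∃ k ∈ Lam a, m + k = a * (y + d) + y} =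
      (summandPairs a y d).image (fun p => a * (p.1 + p.2) + p.2) := by
  have ha : 0 < a := by omega
  ext m
  simp only [Set.mem_ofPred_eq, Finset.coe_image, Set.mem_image, Finset.mem_coe,
    mem_summandPairs]
  constructor
  · rintro ⟨hm, k, hk, hmk⟩
    rw [mem_Lam_iff_mod_le_div ha] at hm hk
    have hmv := Nat.mod_lt m ha
    have hkv := Nat.mod_lt k ha
    rw [← Nat.div_add_mod m a, ← Nat.div_add_mod k a,
      mul_add_add_mul_add_eq_mul_add_iff hmv hkv hy] at hmk
    refine ⟨(m / a - m % a, m % a), by omega, ?_⟩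
    dsimp only
    rw [Nat.sub_add_cancel hm, Nat.div_add_mod]
  · rintro ⟨⟨s, v⟩, hsv, rfl⟩
    dsimp only at hsv ⊢
    refine ⟨(mul_add_mem_Lam_iff (by omega)).2 (by omega), ?_⟩
    rcases hsv with ⟨hs, hv⟩ | ⟨hs, hyv, hv⟩
    · refine ⟨a * (d - s + (y - v)) + (y - v), (mul_add_mem_Lam_iff (by omega)).2 (by omega), ?_⟩
      exact (mul_add_add_mul_add_eq_mul_add_iff (by omega) (by omega) hy).2 (Or.inl (by omega))
    · refine ⟨a * (d - a - 1 - s + (a + y - v)) + (a + y - v),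
        (mul_add_mem_Lam_iff (by omega)).2 (by omega), ?_⟩
      exact (mul_add_add_mul_add_eq_mul_add_iff (by omega) (by omega) hy).2 (Or.inr (by omega))

lemma nu_mul_add {y d : ℕ} (hy : y < a) :
    nu a (a * (y + d) + y) = (d + 1) * (y + 1) + (d - a) * (a - (y + 1)) := by
  have hinj : Set.InjOn (fun p : ℕ × ℕ => a * (p.1 + p.2) + p.2) (summandPairs a y d) := by
    intro p hp q hq hpq
    rw [Finset.mem_coe, mem_summandPairs] at hp hq
    have := eq_and_eq_of_mul_add_eq_mul_add (by omega) (by omega) hpq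
    exact Prod.ext (by omega) this.2
  rw [nu, summands_eq_image_summandPairs hy, Set.ncard_coe_finset,
    Finset.card_image_of_injOn hinj, card_summandPairs]

lemma nu_mul_add_of_le {y d : ℕ} (hy : y < a) (hd : d ≤ a) :
    nu a (a * (y + d) + y) = (d + 1) * (y + 1) := by
  rw [nu_mul_add hy, Nat.sub_eq_zero_of_le hd, zero_mul, add_zero]

lemma nu_mul_add_of_lt {y d : ℕ} (hy : y < a) (hd : a < d) :
    nu a (a * (y + d) + y) = a * (y + d) + y + 1 - a * (a - 1) := by
  have hconductor : a * (a - 1) ≤ a * (y + d) + y + 1 :=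
    (Nat.mul_le_mul_left a (by omega : a - 1 ≤ y + d)).trans (by omega)
  rw [nu_mul_add hy]
  zify [hd.le, hconductor, (by omega : y + 1 ≤ a), (by omega : 1 ≤ a)]
  ring

end

theorem stmt11 (a l : ℕ) (ha : 2 ≤ a) (hl : l ∈ Lam a) :
    (((l / a : ℤ) - a ≤ l % a ∧ (l % a : ℤ) ≤ a - 1) →
      nu a l = (l / a - l % a + 1) * (l % a + 1)) ∧
    (¬ ((l / a : ℤ) - a ≤ l % a ∧ (l % a : ℤ) ≤ a - 1) →
      nu a l = l + 1 - a * (a - 1)) := by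
  have ha0 : 0 < a := by omega
  have hy : l % a < a := Nat.mod_lt _ ha0
  obtain ⟨d, hd⟩ : ∃ d, l / a = l % a + d :=
    ⟨_, (Nat.add_sub_cancel' ((mem_Lam_iff_mod_le_div ha0).1 hl)).symm⟩
  have hl_eq : a * (l % a + d) + l % a = l := by rw [← hd, Nat.div_add_mod]
  rw [← Int.natCast_div, ← Int.natCast_mod, hd, Nat.add_sub_cancel_left]
  generalize l % a = y at hy hl_eq ⊢
  subst hl_eq
  push_cast
  constructor
  · rintro ⟨hda, -⟩
    exact nu_mul_add_of_le hy (by omega)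
  · intro hda
    exact nu_mul_add_of_lt hy (by omega)
end

section
/- For a ≥ 2, if l ∈ ⟨a, a+1⟩ is divisible in two distinct ways, i.e., l = a*x + y = a*x' + y' with y ≤ x, y' ≤ x' and (x, y) ≠ (x', y'), then l - a(a-1) + 1 ∈ ⟨a, a+1⟩. -/
lemma mul_add_succ_sub_mem_Lam {a x y : ℕ} (h : y + a < x) :
    a * x + y + 1 - a * (a - 1) ∈ Lam a := by
  refine ⟨x - a - y, y + 1, ?_⟩
  obtain ⟨k, rfl⟩ : ∃ k, x = y + a + 1 + k := ⟨x - (y + a + 1), by omega⟩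
  rcases Nat.eq_zero_or_pos a with rfl | ha
  · simp
  · obtain ⟨b, rfl⟩ : ∃ b, a = b + 1 := ⟨a - 1, by omega⟩
    have hx : y + (b + 1) + 1 + k - (b + 1) - y = k + 1 := by omega
    rw [hx, Nat.add_sub_cancel]
    have hle : (b + 1) * b ≤ (b + 1) * (y + (b + 1) + 1 + k) + y + 1 := by nlinarith
    zify [hle]
    ring

lemma add_lt_of_mul_add_eq {a x y x' y' : ℕ} (hy : y ≤ x) (hx : x < x')
    (heq : a * x + y = a * x' + y') : y' + a < x' := by
  have : a * (x + 1) ≤ a * x' := Nat.mul_le_mul_left a hx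
  nlinarith

theorem stmt12_general (a x y x' y' : ℕ) (h1 : y ≤ x) (h2 : y' ≤ x')
    (hne : (x, y) ≠ (x', y')) (heq : a * x + y = a * x' + y') :
    a * x + y + 1 - a * (a - 1) ∈ Lam a := by
  rcases lt_trichotomy x x' with hlt | rfl | hgt
  · rw [heq]
    exact mul_add_succ_sub_mem_Lam (add_lt_of_mul_add_eq h1 hlt heq)
  · exact absurd (by rw [Nat.add_left_cancel heq]) hne
  · exact mul_add_succ_sub_mem_Lam (add_lt_of_mul_add_eq h2 hgt heq.symm)

theorem stmt12 (a x y x' y' : ℕ) (ha : 2 ≤ a) (h1 : y ≤ x) (h2 : y' ≤ x')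
    (hne : (x, y) ≠ (x', y')) (heq : a * x + y = a * x' + y') :
    a * x + y + 1 - a * (a - 1) ∈ Lam a :=
  stmt12_general a x y x' y' h1 h2 hne heq
end

section
/- For a ≥ 2 and l = a*x + y ∈ ⟨a, a+1⟩ (Euclidean division, 0 ≤ y < a), the order bound δ(l) = min{ν(l') : l' ∈ Λ, l' > l} is given by: x + 1 if x < a and y ≠ x; x + 2 if x < a and y = x; a(x - a + 2) if x ≥ a and x - a ≤ y < a - 1; and l - a(a-1) + 2 otherwise. -/
/-- The order bound `δ(l) = min {ν(l') : l' ∈ Λ, l' > l}`. -/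
noncomputable def deltaOB (a l : ℕ) : ℕ := sInf (nu a '' {l' | l' ∈ Lam a ∧ l < l'})

lemma mem_lam_iff {a n : ℕ} : n ∈ Lam a ↔ ∃ p q : ℕ, q ≤ p ∧ n = p * a + q := by
  constructor
  · rintro ⟨i, j, rfl⟩
    exact ⟨i + j, j, by omega, by ring⟩
  · rintro ⟨p, q, hqp, rfl⟩
    refine ⟨p - q, q, ?_⟩
    have h2 : q * a ≤ p * a := Nat.mul_le_mul_right a hqp
    have : (p - q) * a + q * (a + 1) = p * a + q := by
      rw [Nat.sub_mul]; zify [h2]; ring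
    rw [this]

lemma mem_lam_iff' {a n : ℕ} (ha : 1 ≤ a) :
    n ∈ Lam a ↔ ∃ p q : ℕ, q ≤ p ∧ q < a ∧ n = p * a + q := by
  rw [mem_lam_iff]
  constructor
  · rintro ⟨p, q, hqp, rfl⟩
    obtain ⟨d, r, hr, hq⟩ : ∃ d r, r < a ∧ q = a * d + r :=
      ⟨q / a, q % a, Nat.mod_lt _ ha, (Nat.div_add_mod q a).symm⟩
    have hcomm : d * a = a * d := mul_comm d a
    refine ⟨p + d, r, by omega, hr, ?_⟩
    rw [add_mul]
    omega
  · rintro ⟨p, q, hqp, _, rfl⟩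
    exact ⟨p, q, hqp, rfl⟩

lemma rep_unique {a p1 q1 p2 q2 : ℕ} (h1 : q1 < a) (h2 : q2 < a)
    (h : p1 * a + q1 = p2 * a + q2) : p1 = p2 ∧ q1 = q2 := by
  rcases lt_trichotomy p1 p2 with hc | hc | hc
  · have : p1 * a + a ≤ p2 * a := by
      have := Nat.mul_le_mul_right a (show p1 + 1 ≤ p2 by omega)
      rw [add_mul] at this; omega
    omega
  · subst hc; omega
  · have : p2 * a + a ≤ p1 * a := by
      have := Nat.mul_le_mul_right a (show p2 + 1 ≤ p1 by omega)
      rw [add_mul] at this; omega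
    omega

lemma key_split {a d e x y : ℕ} (h : d * a + e = x * a + y) (he : e < 2 * a)
    (hy : y < a) : (d = x ∧ e = y) ∨ (d + 1 = x ∧ e = y + a) := by
  rcases lt_trichotomy d x with hc | hc | hc
  · rcases Nat.lt_or_ge (d + 1) x with hc2 | hc2
    · exfalso
      have : d * a + 2 * a ≤ x * a := by
        have := Nat.mul_le_mul_right a (show d + 2 ≤ x by omega)
        rw [add_mul] at this; omega
      omega
    · have hx : x = d + 1 := by omega
      subst hx
      rw [add_mul] at h
      omega
  · subst hc; omega
  · exfalso
    have : x * a + a ≤ d * a := by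
      have := Nat.mul_le_mul_right a (show x + 1 ≤ d by omega)
      rw [add_mul] at this; omega
    omega

lemma nu_eq {a x y : ℕ} (ha : 2 ≤ a) (hyx : y ≤ x) (hy : y < a) :
    nu a (x * a + y) = (y + 1) * (x - y + 1) + (a - 1 - y) * (x - a - y) := by
  have ha1 : (1 : ℕ) ≤ a := by omega
  set F : Finset ℕ := (Finset.range a).biUnion
    (fun q => (Finset.Ico q (if q ≤ y then x - y + q + 1 else x - a - y + q)).image
      (fun p => p * a + q)) with hF
  have hset : {m | m ∈ Lam a ∧ ∃ k ∈ Lam a, m + k = x * a + y} = ↑F := by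
    ext m
    rw [Finset.mem_coe]
    simp only [Set.mem_setOf_eq, hF, Finset.mem_biUnion, Finset.mem_range,
      Finset.mem_image, Finset.mem_Ico]
    constructor
    · rintro ⟨hm, k, hk, hmk⟩
      rw [mem_lam_iff' ha1] at hm hk
      obtain ⟨p, q, hqp, hq, rfl⟩ := hm
      obtain ⟨p2, q2, hqp2, hq2, rfl⟩ := hk
      have hsum : (p + p2) * a + (q + q2) = x * a + y := by rw [add_mul]; omega
      rcases key_split hsum (by omega) hy with ⟨hd, he⟩ | ⟨hd, he⟩
      · exact ⟨q, hq, ⟨p, ⟨hqp, by rw [if_pos (by omega)]; omega⟩, rfl⟩⟩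
      · refine ⟨q, hq, ⟨p, ⟨hqp, ?_⟩, rfl⟩⟩
        rw [if_neg (by omega)]
        omega
    · rintro ⟨q, hq, p, ⟨hqp, hub⟩, rfl⟩
      refine ⟨mem_lam_iff.2 ⟨p, q, hqp, rfl⟩, ?_⟩
      by_cases hqy : q ≤ y
      · rw [if_pos hqy] at hub
        refine ⟨(x - p) * a + (y - q), mem_lam_iff.2 ⟨x - p, y - q, by omega, rfl⟩, ?_⟩
        have hpx : p ≤ x := by omega
        have : p * a + (x - p) * a = x * a := by rw [← add_mul]; congr 1; omega
        omega
      · rw [if_neg hqy] at hub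
        -- here q > y and p + 1 ≤ x - a - y + q, in particular x ≥ p + 1
        refine ⟨(x - p - 1) * a + (a + y - q), mem_lam_iff.2 ⟨x - p - 1, a + y - q, by omega, rfl⟩, ?_⟩
        have hpx : p + 1 ≤ x := by omega
        have h1 : p * a + (x - p - 1) * a = (x - 1) * a := by rw [← add_mul]; congr 1; omega
        have h2 : (x - 1 + 1) * a = (x - 1) * a + a := by rw [add_mul, one_mul]
        rw [show x - 1 + 1 = x by omega] at h2
        omega
  rw [nu, hset, Set.ncard_coe_finset, hF]
  rw [Finset.card_biUnion (by
    intro q1 h1 q2 h2 hne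
    simp only [Finset.mem_coe, Finset.mem_range] at h1 h2
    rw [Function.onFun, Finset.disjoint_left]
    rintro m hm1 hm2
    simp only [Finset.mem_image, Finset.mem_Ico] at hm1 hm2
    obtain ⟨p1, _, rfl⟩ := hm1
    obtain ⟨p2, _, h⟩ := hm2
    exact hne ((rep_unique h1 h2 h.symm).2))]
  have hcard : ∀ q ∈ Finset.range a,
      ((Finset.Ico q (if q ≤ y then x - y + q + 1 else x - a - y + q)).image
        (fun p => p * a + q)).card = if q ≤ y then x - y + 1 else x - a - y := by
    intro q hq
    rw [Finset.card_image_of_injective _ (fun p1 p2 h => by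
      have h2 : p1 * a = p2 * a := by omega
      exact Nat.eq_of_mul_eq_mul_right (by omega) h2)]
    rw [Nat.card_Ico]
    split <;> omega
  rw [Finset.sum_congr rfl hcard, Finset.sum_ite, Finset.sum_const, Finset.sum_const,
    smul_eq_mul, smul_eq_mul]
  have hf1 : (Finset.range a).filter (fun q => q ≤ y) = Finset.range (y + 1) := by
    ext q
    simp only [Finset.mem_filter, Finset.mem_range]
    omega
  have hf2 := Finset.card_filter_add_card_filter_not
    (s := Finset.range a) (p := fun q => q ≤ y)
  rw [hf1] at hf2 ⊢
  simp only [Finset.card_range] at hf2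
  have hf3 : ((Finset.range a).filter (fun q => ¬ q ≤ y)).card = a - 1 - y := by omega
  rw [Finset.card_range, hf3]

lemma div_mod_canon {a x y : ℕ} (ha : 1 ≤ a) (hy : y < a) :
    (x * a + y) / a = x ∧ (x * a + y) % a = y := by
  constructor
  · rw [mul_comm, Nat.mul_add_div (by omega), Nat.div_eq_of_lt hy]
    omega
  · rw [mul_comm, Nat.mul_add_mod, Nat.mod_eq_of_lt hy]

lemma deltaOB_eq_of {a l d : ℕ}
    (hw : ∃ l', (l' ∈ Lam a ∧ l < l') ∧ nu a l' = d)
    (hlb : ∀ l', l' ∈ Lam a → l < l' → d ≤ nu a l') : deltaOB a l = d := by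
  obtain ⟨l', hl', hnu⟩ := hw
  have hmem : d ∈ nu a '' {l' | l' ∈ Lam a ∧ l < l'} := ⟨l', hl', hnu⟩
  refine le_antisymm (Nat.sInf_le hmem) (le_csInf ⟨d, hmem⟩ ?_)
  rintro b ⟨l'', ⟨h1, h2⟩, rfl⟩
  exact hlb l'' h1 h2

lemma lt_cases {a x y x' y' : ℕ} (hy : y < a) (hy' : y' < a)
    (h : x * a + y < x' * a + y') : x < x' ∨ (x = x' ∧ y < y') := by
  rcases lt_trichotomy x x' with hc | hc | hc
  · exact Or.inl hc
  · exact Or.inr ⟨hc, by subst hc; omega⟩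
  · exfalso
    have : x' * a + a ≤ x * a := by
      have := Nat.mul_le_mul_right a (show x' + 1 ≤ x by omega)
      rw [add_mul] at this; omega
    omega

-- the value of the counting polynomial in the "large" regime

lemma g_large {a x y : ℕ} (ha : 2 ≤ a) (hy : y < a) (h : a + y ≤ x) :
    (y + 1) * (x - y + 1) + (a - 1 - y) * (x - a - y)
      = a * (x - a - y) + (a + 1) * y + a + 1 := by
  obtain ⟨k, rfl⟩ : ∃ k, x = a + y + k := ⟨x - a - y, by omega⟩
  obtain ⟨m, rfl⟩ : ∃ m, a = y + 1 + m := ⟨a - y - 1, by omega⟩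
  have h1 : y + 1 + m + y + k - y + 1 = y + m + k + 2 := by omega
  have h2 : y + 1 + m + y + k - (y + 1 + m) - y = k := by omega
  have h3 : y + 1 + m - 1 - y = m := by omega
  rw [h1, h2, h3]
  ring

lemma arith_ge {y' s' : ℕ} : y' + s' + 1 ≤ (y' + 1) * (s' + 1) := by nlinarith

lemma arith3A {a t y' k' : ℕ} (ha : 2 ≤ a) (h : t + 1 ≤ y' + k') :
    a * (t + 2) ≤ a * k' + (a + 1) * y' + a + 1 := by
  have := Nat.mul_le_mul_left a h
  nlinarith

lemma arith3B {a t y' s' : ℕ} (h1 : t + 1 ≤ y') (h2 : t + 1 ≤ s')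
    (h3 : a + t ≤ y' + s') : a * (t + 2) ≤ (y' + 1) * (s' + 1) := by
  obtain ⟨u, rfl⟩ : ∃ u, y' = t + 1 + u := ⟨y' - t - 1, by omega⟩
  obtain ⟨v, rfl⟩ : ∃ v, s' = t + 1 + v := ⟨s' - t - 1, by omega⟩
  nlinarith

lemma arith4A {a t y k' y' : ℕ} (h : (a + t) * a + y + 1 ≤ (y' + a + k') * a + y') :
    a * t + a + y + 2 ≤ a * k' + (a + 1) * y' + a + 1 := by nlinarith

lemma arith4B {a t y y' s' : ℕ} (ha : 2 ≤ a)
    (h : (a + t) * a + y + 1 ≤ (y' + s') * a + y')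
    (hy' : y' + 1 ≤ a) (hs' : s' + 1 ≤ a) (hyt : y + 1 ≤ t) :
    a * t + a + y + 2 ≤ (y' + 1) * (s' + 1) := by
  obtain ⟨u, hu⟩ : ∃ u, a = y' + 1 + u := ⟨a - y' - 1, by omega⟩
  obtain ⟨v, hv⟩ : ∃ v, a = s' + 1 + v := ⟨a - s' - 1, by omega⟩
  nlinarith

lemma arith4a {a t y' s' : ℕ} (ha : 2 ≤ a) (h : a + t + 1 ≤ y' + s')
    (hy' : y' + 1 ≤ a) (hs' : s' + 1 ≤ a) :
    a * t + 2 * a + 1 ≤ (y' + 1) * (s' + 1) := by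
  obtain ⟨u, hu⟩ : ∃ u, a = y' + 1 + u := ⟨a - y' - 1, by omega⟩
  obtain ⟨v, hv⟩ : ∃ v, a = s' + 1 + v := ⟨a - s' - 1, by omega⟩
  nlinarith

theorem stmt15 (a l : ℕ) (ha : 2 ≤ a) (hl : l ∈ Lam a) :
    deltaOB a l =
      if l / a < a ∧ l % a ≠ l / a then l / a + 1
      else if l / a < a ∧ l % a = l / a then l / a + 2
      else if a ≤ l / a ∧ l / a - a ≤ l % a ∧ l % a < a - 1 then
        a * (l / a - a + 2)
      else l + 2 - a * (a - 1) := by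
  obtain ⟨x, y, hyx, hy, rfl⟩ := (mem_lam_iff' (show 1 ≤ a by omega)).1 hl
  obtain ⟨hdiv, hmod⟩ := div_mod_canon (show 1 ≤ a by omega) hy
  rw [hdiv, hmod]
  by_cases h1 : x < a ∧ y ≠ x
  · rw [if_pos h1]
    apply deltaOB_eq_of
    · refine ⟨x * a + x, ⟨mem_lam_iff.2 ⟨x, x, le_rfl, rfl⟩, by omega⟩, ?_⟩
      rw [nu_eq ha le_rfl h1.1]
      have e1 : x - x + 1 = 1 := by omega
      have e2 : x - a - x = 0 := by omega
      rw [e1, e2]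
      ring
    · intro l' hl' hlt
      obtain ⟨x', y', hyx', hy', rfl⟩ := (mem_lam_iff' (show 1 ≤ a by omega)).1 hl'
      rw [nu_eq ha hyx' hy']
      have hc := lt_cases hy hy' hlt
      obtain ⟨s', rfl⟩ : ∃ s', x' = y' + s' := ⟨x' - y', by omega⟩
      have e1 : y' + s' - y' + 1 = s' + 1 := by omega
      rw [e1]
      have := arith_ge (y' := y') (s' := s')
      have hxx : x ≤ y' + s' := by omega
      omega
  · rw [if_neg h1]
    by_cases h2 : x < a ∧ y = x
    · rw [if_pos h2]
      apply deltaOB_eq_of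
      · refine ⟨(x + 1) * a + 0, ⟨mem_lam_iff.2 ⟨x + 1, 0, by omega, rfl⟩, ?_⟩, ?_⟩
        · have e : (x + 1) * a = x * a + a := by ring
          omega
        · rw [nu_eq ha (by omega) (by omega)]
          have e1 : x + 1 - 0 + 1 = x + 2 := by omega
          have e2 : x + 1 - a - 0 = 0 := by omega
          rw [e1, e2]
          ring
      · intro l' hl' hlt
        obtain ⟨x', y', hyx', hy', rfl⟩ := (mem_lam_iff' (show 1 ≤ a by omega)).1 hl'
        rw [nu_eq ha hyx' hy']
        have hc := lt_cases hy hy' hlt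
        obtain ⟨s', rfl⟩ : ∃ s', x' = y' + s' := ⟨x' - y', by omega⟩
        have e1 : y' + s' - y' + 1 = s' + 1 := by omega
        rw [e1]
        have := arith_ge (y' := y') (s' := s')
        have hxx : x + 1 ≤ y' + s' := by omega
        omega
    · rw [if_neg h2]
      have hax : a ≤ x := by omega
      obtain ⟨t, rfl⟩ : ∃ t, x = a + t := ⟨x - a, by omega⟩
      by_cases h3 : a ≤ a + t ∧ a + t - a ≤ y ∧ y < a - 1
      · rw [if_pos h3]
        have hty : t ≤ y := by omega
        have hdd : a + t - a + 2 = t + 2 := by omega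
        rw [hdd]
        apply deltaOB_eq_of
        · refine ⟨(a + t) * a + (a - 1),
            ⟨mem_lam_iff.2 ⟨a + t, a - 1, by omega, rfl⟩, by omega⟩, ?_⟩
          rw [nu_eq ha (by omega) (by omega)]
          have e1 : a + t - (a - 1) + 1 = t + 2 := by omega
          have e2 : a - 1 - (a - 1) = 0 := by omega
          have e3 : a - 1 + 1 = a := by omega
          rw [e1, e2, e3]
          ring
        · intro l' hl' hlt
          obtain ⟨x', y', hyx', hy', rfl⟩ := (mem_lam_iff' (show 1 ≤ a by omega)).1 hl'
          rw [nu_eq ha hyx' hy']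
          have hc := lt_cases hy hy' hlt
          by_cases hreg : a + y' ≤ x'
          · rw [g_large ha hy' hreg]
            obtain ⟨k', rfl⟩ : ∃ k', x' = y' + a + k' := ⟨x' - a - y', by omega⟩
            have e1 : y' + a + k' - a - y' = k' := by omega
            rw [e1]
            exact arith3A ha (by omega)
          · obtain ⟨s', rfl⟩ : ∃ s', x' = y' + s' := ⟨x' - y', by omega⟩
            have e1 : y' + s' - y' + 1 = s' + 1 := by omega
            have e2 : y' + s' - a - y' = 0 := by omega
            rw [e1, e2, mul_zero, add_zero]
            exact arith3B (by omega) (by omega) (by omega)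
      · rw [if_neg h3]
        have hD : (a + t) * a + y + 2 - a * (a - 1) = a * t + a + y + 2 := by
          obtain ⟨m, rfl⟩ : ∃ m, a = m + 2 := ⟨a - 2, by omega⟩
          have e : m + 2 - 1 = m + 1 := by omega
          rw [e]
          have hle : (m + 2) * (m + 1) ≤ (m + 2 + t) * (m + 2) + y + 2 := by nlinarith
          zify [hle]
          ring
        rw [hD]
        apply deltaOB_eq_of
        · by_cases hya : y = a - 1
          · refine ⟨(a + t + 1) * a + 0,
              ⟨mem_lam_iff.2 ⟨a + t + 1, 0, by omega, rfl⟩, ?_⟩, ?_⟩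
            · have e : (a + t + 1) * a = (a + t) * a + a := by ring
              omega
            · rw [nu_eq ha (by omega) (by omega), g_large ha (by omega) (by omega)]
              have e1 : a + t + 1 - a - 0 = t + 1 := by omega
              rw [e1]
              have e2 : (a + 1) * 0 = 0 := by ring
              have e3 : a * (t + 1) = a * t + a := by ring
              rw [e2, e3]
              omega
          · have hyt : y + 1 ≤ t := by omega
            refine ⟨(a + t) * a + (y + 1),
              ⟨mem_lam_iff.2 ⟨a + t, y + 1, by omega, rfl⟩, by omega⟩, ?_⟩
            rw [nu_eq ha (by omega) (by omega), g_large ha (by omega) (by omega)]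
            obtain ⟨k, rfl⟩ : ∃ k, t = y + 1 + k := ⟨t - y - 1, by omega⟩
            have e1 : a + (y + 1 + k) - a - (y + 1) = k := by omega
            rw [e1]
            ring
        · intro l' hl' hlt
          obtain ⟨x', y', hyx', hy', rfl⟩ := (mem_lam_iff' (show 1 ≤ a by omega)).1 hl'
          rw [nu_eq ha hyx' hy']
          have hc := lt_cases hy hy' hlt
          by_cases hreg : a + y' ≤ x'
          · rw [g_large ha hy' hreg]
            obtain ⟨k', rfl⟩ : ∃ k', x' = y' + a + k' := ⟨x' - a - y', by omega⟩
            have e1 : y' + a + k' - a - y' = k' := by omega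
            rw [e1]
            exact arith4A (by omega)
          · obtain ⟨s', rfl⟩ : ∃ s', x' = y' + s' := ⟨x' - y', by omega⟩
            have e1 : y' + s' - y' + 1 = s' + 1 := by omega
            have e2 : y' + s' - a - y' = 0 := by omega
            rw [e1, e2, mul_zero, add_zero]
            by_cases hya : y = a - 1
            · have hbig := arith4a (a := a) (t := t) (y' := y') (s' := s') ha (by omega) (by omega) (by omega)
              omega
            · exact arith4B ha (by omega) (by omega) (by omega) (by omega)
end

section
/- Let a ≥ 2 and let t = x(x+1)/2 + y with 0 ≤ y ≤ x < a - 1, so that λ(t) = a*x + y. Then the complement Λ \ {λ(i) + λ(j) : i, j ≥ t} equals the disjoint union of A = {l ∈ Λ : l < 2*a*x + 2*y} and B = {l ∈ Λ^{2x+1} : l < a(2x+1) + y} \ Λ^{2x}, and consequently: if 2x < a then |Λ \ {λ(i)+λ(j) : i,j ≥ t}| = 2x² + x + 3y; if 2x ≥ a and y > 2x - a + 1 then it equals 2*a*x + 3y - 2x - (a² - 3a)/2 - 1; and if 2x ≥ a and y ≤ 2x - a + 1 then it equals 2*a*x + 2y - (a² - a)/2. -/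
namespace Stmt18Aux

lemma lam_of {a q r : ℕ} (h : r ≤ q) : a * q + r ∈ Lam a := by
  obtain ⟨d, rfl⟩ := Nat.exists_eq_add_of_le h
  exact ⟨d, r, by ring⟩

lemma lam_mod {a n : ℕ} (ha : 0 < a) (h : n ∈ Lam a) : n % a ≤ n / a := by
  obtain ⟨i, j, rfl⟩ := h
  have h1 : i * a + j * (a + 1) = a * (i + j) + j := by ring
  rw [h1, Nat.mul_add_div ha, Nat.mul_add_mod]
  have h2 := Nat.mod_le j a
  linarith [Nat.zero_le (j / a), Nat.zero_le i]

lemma mem_lam_iff {a n : ℕ} (ha : 0 < a) : n ∈ Lam a ↔ n % a ≤ n / a := by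
  constructor
  · exact lam_mod ha
  · intro h
    exact (Nat.div_add_mod n a) ▸ lam_of h

lemma lam_repr {a n : ℕ} (ha : 0 < a) (h : n ∈ Lam a) :
    ∃ q r, r ≤ q ∧ r < a ∧ n = a * q + r :=
  ⟨n / a, n % a, lam_mod ha h, Nat.mod_lt n ha,
    (Nat.div_add_mod n a).symm⟩

lemma lam_infinite (a : ℕ) : {n | n ∈ Lam a}.Infinite := by
  refine Set.infinite_of_injective_forall_mem (f := fun k : ℕ => k * (a + 1)) ?_ ?_
  · intro m n h
    exact Nat.eq_of_mul_eq_mul_right (by omega) h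
  · intro k
    exact ⟨0, k, by ring⟩

section Count

variable {a : ℕ} [DecidablePred fun n => n ∈ Lam a]

lemma count_step (ha : 0 < a) (x : ℕ) : ∀ d, d ≤ a →
    Nat.count (fun n => n ∈ Lam a) (a * x + d)
      = Nat.count (fun n => n ∈ Lam a) (a * x) + min d (x + 1)
  | 0, _ => by simp
  | (d+1), hd => by
    have ih := count_step ha x d (by omega)
    have h1 : a * x + (d + 1) = (a * x + d) + 1 := by ring
    rw [h1, Nat.count_succ, ih]
    have hmem : ((a * x + d) ∈ Lam a) ↔ d ≤ x := by
      rw [mem_lam_iff ha, Nat.mul_add_div ha, Nat.mul_add_mod,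
        Nat.div_eq_of_lt (by omega), Nat.mod_eq_of_lt (by omega)]
      omega
    by_cases hdx : d ≤ x
    · have hp : (fun n => n ∈ Lam a) (a * x + d) := hmem.mpr hdx
      rw [if_pos hp]
      omega
    · have hp : ¬ (fun n => n ∈ Lam a) (a * x + d) := fun h => hdx (hmem.mp h)
      rw [if_neg hp]
      omega

lemma count_mul (ha : 0 < a) : ∀ x, x ≤ a →
    Nat.count (fun n => n ∈ Lam a) (a * x) * 2 = x * (x + 1)
  | 0, _ => by simp
  | (x+1), hx => by
    have ih := count_mul ha x (by omega)
    have h1 : a * (x + 1) = a * x + a := by ring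
    rw [h1, count_step ha x a le_rfl]
    have h2 : min a (x + 1) = x + 1 := by omega
    rw [h2]
    have h3 : (x + 1) * (x + 1 + 1) = x * (x + 1) + (x + 1) * 2 := by ring
    linarith

lemma count_tri (ha : 0 < a) {x y : ℕ} (hyx : y ≤ x) (hx : x < a) :
    Nat.count (fun n => n ∈ Lam a) (a * x + y) * 2 = x * (x + 1) + 2 * y := by
  rw [count_step ha x y (by omega)]
  have h2 : min y (x + 1) = y := by omega
  rw [h2]
  linarith [count_mul ha x (by omega)]

lemma count_big (ha : 0 < a) : ∀ n, a * (a - 1) ≤ n →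
    Nat.count (fun n => n ∈ Lam a) n * 2 + a * (a - 1) = n * 2 := by
  intro n hn
  induction n, hn using Nat.le_induction with
  | base =>
    have h1 := count_mul ha (a - 1) (by omega)
    have h2 : (a - 1) * (a - 1 + 1) = a * (a - 1) := by
      rw [show a - 1 + 1 = a from by omega]; ring
    linarith
  | succ n hn ih =>
    have hmem : n ∈ Lam a := by
      rw [mem_lam_iff ha]
      have hmod : n % a < a := Nat.mod_lt n ha
      have hdiv : a - 1 ≤ n / a := by
        rw [Nat.le_div_iff_mul_le ha]
        have : (a - 1) * a = a * (a - 1) := by ring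
        linarith
      omega
    rw [Nat.count_succ, if_pos (show (fun n => n ∈ Lam a) n from hmem)]
    linarith

end Count

lemma split_mid {y x r : ℕ} (h1 : 2 * y ≤ r) (h2 : r ≤ 2 * x) (hyx : y ≤ x) :
    ∃ s s', y ≤ s ∧ s ≤ x ∧ y ≤ s' ∧ s' ≤ x ∧ s + s' = r := by
  rcases le_total r (x + y) with h | h
  · exact ⟨r - y, y, by omega, by omega, le_rfl, hyx, by omega⟩
  · exact ⟨x, r - x, hyx, le_rfl, by omega, by omega, by omega⟩

lemma sub1 {a x y l : ℕ} (ha : 2 ≤ a) (hyx : y ≤ x) (hx : x < a - 1)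
    (hl : l ∈ Lam a) (hge : 2 * a * x + 2 * y ≤ l)
    (hB : ¬ ((l ∈ LamX a (2 * x + 1) ∧ l < a * (2 * x + 1) + y) ∧ l ∉ LamX a (2 * x))) :
    ∃ m m', m ∈ Lam a ∧ a * x + y ≤ m ∧ m' ∈ Lam a ∧ a * x + y ≤ m' ∧ l = m + m' := by
  have ha0 : 0 < a := by omega
  obtain ⟨q, r, hrq, hra, hl'⟩ := lam_repr ha0 hl
  have hax : 2 * a * x = a * x + a * x := by ring
  have hq : 2 * x ≤ q := by
    by_contra hc
    push_neg at hc
    have h2 : a * q + a = a * (q + 1) := by ring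
    have h3 : a * (q + 1) ≤ a * (2 * x) := Nat.mul_le_mul le_rfl (by omega)
    have h4 : a * (2 * x) = a * x + a * x := by ring
    linarith
  have hya : y < a := by omega
  rcases (show q = 2 * x ∨ q = 2 * x + 1 ∨ 2 * x + 2 ≤ q by omega) with hq2 | hq2 | hq2
  · subst hq2
    have h4 : a * (2 * x) = a * x + a * x := by ring
    have hr2 : 2 * y ≤ r := by linarith
    obtain ⟨s, s', hs1, hs2, hs3, hs4, hs5⟩ := split_mid hr2 (by omega) hyx
    exact ⟨a * x + s, a * x + s', lam_of hs2, by linarith, lam_of hs4, by linarith,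
      by rw [hl']; linarith⟩
  · subst hq2
    have h5 : a * (2 * x + 1) = a * x + a * x + a := by ring
    by_cases hry : y ≤ r
    · obtain ⟨s, s', hs1, hs2, hs3, hs4⟩ : ∃ s s', y ≤ s ∧ s ≤ x ∧ s' ≤ x + 1 ∧ s + s' = r :=
        ⟨min x r, r - min x r, by omega, by omega, by omega, by omega⟩
      have h6 : a * (x + 1) = a * x + a := by ring
      exact ⟨a * x + s, a * (x + 1) + s', lam_of hs2, by linarith, lam_of hs3, by linarith,
        by rw [hl']; linarith⟩
    · push_neg at hry
      have hmem2 : l ∈ LamX a (2 * x) := by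
        by_contra hc
        exact hB ⟨⟨⟨r, by omega, hl'⟩, by rw [hl']; linarith⟩, hc⟩
      obtain ⟨v, hv, hveq⟩ := hmem2
      have h7 : a * (2 * x) = a * x + a * x := by ring
      have hv' : v = a + r := by linarith
      have h2y : 2 * y ≤ v := by linarith
      obtain ⟨s, s', hs1, hs2, hs3, hs4, hs5⟩ := split_mid h2y hv hyx
      exact ⟨a * x + s, a * x + s', lam_of hs2, by linarith, lam_of hs4, by linarith,
        by rw [hveq]; linarith⟩
  · obtain ⟨e, rfl⟩ : ∃ e, q = 2 * x + 2 + e := ⟨q - (2 * x + 2), by omega⟩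
    have h10 : a * (2 * x + 2 + e) = a * (x + 1) + a * (x + 1 + e) := by ring
    have h6 : a * (x + 1) = a * x + a := by ring
    have h11 : a * (x + 1) ≤ a * (x + 1 + e) := Nat.mul_le_mul le_rfl (by omega)
    obtain ⟨s, s', hs1, hs2, hs3⟩ : ∃ s s', s ≤ x + 1 ∧ s' ≤ x + 1 + e ∧ s + s' = r :=
      ⟨min r (x + 1), r - min r (x + 1), by omega, by omega, by omega⟩
    exact ⟨a * (x + 1) + s, a * (x + 1 + e) + s', lam_of hs1, by linarith, lam_of hs2,
      by linarith, by rw [hl']; linarith⟩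

lemma sub2 {a x y l : ℕ} (ha : 2 ≤ a) (hyx : y ≤ x) (hx : x < a - 1)
    (hB1 : l ∈ LamX a (2 * x + 1)) (hB2 : l < a * (2 * x + 1) + y)
    (hB3 : l ∉ LamX a (2 * x)) :
    ¬ ∃ m m', m ∈ Lam a ∧ a * x + y ≤ m ∧ m' ∈ Lam a ∧ a * x + y ≤ m' ∧ l = m + m' := by
  have ha0 : 0 < a := by omega
  rintro ⟨m, m', hm, hmL, hm', hmL', heq⟩
  obtain ⟨y', hy'le, hleq⟩ := hB1
  have h5 : a * (2 * x + 1) = a * x + a * x + a := by ring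
  have h7 : a * (2 * x + 1) = a * (2 * x) + a := by ring
  have hyy : y' < y := by linarith
  have h2x : 2 * x < a + y' := by
    by_contra hc
    push_neg at hc
    exact hB3 ⟨a + y', by omega, by linarith⟩
  have e1 : a * (x + 1) = a * x + a := by ring
  have hub : m < a * x + a := by linarith
  have hub' : m' < a * x + a := by linarith
  obtain ⟨qm, rm, hrm, hram, hmeq⟩ := lam_repr ha0 hm
  obtain ⟨qm', rm', hrm', hram', hmeq'⟩ := lam_repr ha0 hm'
  have e2 : a * (qm + 1) = a * qm + a := by ring
  have e2' : a * (qm' + 1) = a * qm' + a := by ring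
  have hqm : qm = x := by
    have l1 : qm < x + 1 := Nat.lt_of_mul_lt_mul_left (a := a) (by linarith)
    have l2 : x < qm + 1 := Nat.lt_of_mul_lt_mul_left (a := a) (by linarith)
    omega
  have hqm' : qm' = x := by
    have l1 : qm' < x + 1 := Nat.lt_of_mul_lt_mul_left (a := a) (by linarith)
    have l2 : x < qm' + 1 := Nat.lt_of_mul_lt_mul_left (a := a) (by linarith)
    omega
  subst hqm
  subst hqm'
  linarith

end Stmt18Aux
theorem stmt18 (a x y : ℕ) (ha : 2 ≤ a) (hyx : y ≤ x) (hx : x < a - 1) :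
    let t := x * (x + 1) / 2 + y
    let S : Set ℕ := {n | ∃ i j : ℕ, t ≤ i ∧ t ≤ j ∧
      n = Nat.nth (fun m => m ∈ Lam a) i + Nat.nth (fun m => m ∈ Lam a) j}
    let A : Set ℕ := {l | l ∈ Lam a ∧ l < 2 * a * x + 2 * y}
    let B : Set ℕ := {l | l ∈ LamX a (2 * x + 1) ∧ l < a * (2 * x + 1) + y} \ LamX a (2 * x)
    (Lam a \ S = A ∪ B) ∧ Disjoint A B ∧
    (2 * x < a → (Lam a \ S).ncard = 2 * x ^ 2 + x + 3 * y) ∧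
    (a ≤ 2 * x → 2 * x - a + 1 < y →
      (Lam a \ S).ncard = 2 * a * x + 3 * y - 2 * x - (a ^ 2 - 3 * a) / 2 - 1) ∧
    (a ≤ 2 * x → y ≤ 2 * x - a + 1 →
      (Lam a \ S).ncard = 2 * a * x + 2 * y - (a ^ 2 - a) / 2) := by
  intro t S A B
  classical
  have ha0 : 0 < a := by omega
  have hinf : {n | n ∈ Lam a}.Infinite := Stmt18Aux.lam_infinite a
  -- the nth value at t
  have hcount : Nat.count (fun m => m ∈ Lam a) (a * x + y) = t := by
    show Nat.count (fun m => m ∈ Lam a) (a * x + y) = x * (x + 1) / 2 + y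
    have h3 := Stmt18Aux.count_tri (a := a) ha0 hyx (show x < a by omega)
    obtain ⟨k, hk⟩ := Nat.even_mul_succ_self x
    rw [hk] at h3 ⊢
    omega
  have hnth : Nat.nth (fun m => m ∈ Lam a) t = a * x + y := by
    rw [← hcount]
    exact Nat.nth_count (Stmt18Aux.lam_of hyx)
  -- rewrite S
  have hS : S = {n | ∃ m m', m ∈ Lam a ∧ a * x + y ≤ m ∧ m' ∈ Lam a ∧ a * x + y ≤ m' ∧
      n = m + m'} := by
    ext n
    constructor
    · intro h
      obtain ⟨i, j, hi, hj, rfl⟩ : ∃ i j, t ≤ i ∧ t ≤ j ∧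
          n = Nat.nth (fun m => m ∈ Lam a) i + Nat.nth (fun m => m ∈ Lam a) j := h
      refine ⟨_, _, Nat.nth_mem_of_infinite hinf i, ?_, Nat.nth_mem_of_infinite hinf j, ?_, rfl⟩
      · rw [← hnth]; exact (Nat.nth_le_nth hinf).mpr hi
      · rw [← hnth]; exact (Nat.nth_le_nth hinf).mpr hj
    · rintro ⟨m, m', hm, hmL, hm', hmL', rfl⟩
      exact ⟨Nat.count (fun m => m ∈ Lam a) m, Nat.count (fun m => m ∈ Lam a) m',
        by rw [← hcount]; exact Nat.count_monotone _ hmL,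
        by rw [← hcount]; exact Nat.count_monotone _ hmL',
        by rw [Nat.nth_count hm, Nat.nth_count hm']⟩
  -- the main set identity, with explicit sets
  have hmain : Lam a \ S = ({l | l ∈ Lam a ∧ l < 2 * a * x + 2 * y} ∪
      ({l | l ∈ LamX a (2 * x + 1) ∧ l < a * (2 * x + 1) + y} \ LamX a (2 * x))) := by
    rw [hS]
    ext l
    simp only [Set.mem_diff, Set.mem_union, Set.mem_setOf_eq]
    constructor
    · rintro ⟨hl, hlS⟩
      by_cases hA' : l < 2 * a * x + 2 * y
      · exact Or.inl ⟨hl, hA'⟩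
      · by_cases hB' : (l ∈ LamX a (2 * x + 1) ∧ l < a * (2 * x + 1) + y) ∧ l ∉ LamX a (2 * x)
        · exact Or.inr hB'
        · exact absurd (Stmt18Aux.sub1 ha hyx hx hl (Nat.le_of_not_lt hA') hB') hlS
    · rintro (⟨hl, hlt⟩ | ⟨⟨hB1, hB2⟩, hB3⟩)
      · refine ⟨hl, ?_⟩
        rintro ⟨m, m', _, hmL, _, hmL', rfl⟩
        have he : 2 * a * x + 2 * y = (a * x + y) + (a * x + y) := by ring
        linarith
      · have hlΛ : l ∈ Lam a := by
          obtain ⟨y', hy', rfl⟩ := hB1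
          exact Stmt18Aux.lam_of hy'
        exact ⟨hlΛ, Stmt18Aux.sub2 ha hyx hx hB1 hB2 hB3⟩
  have hdisj : Disjoint {l | l ∈ Lam a ∧ l < 2 * a * x + 2 * y}
      ({l | l ∈ LamX a (2 * x + 1) ∧ l < a * (2 * x + 1) + y} \ LamX a (2 * x)) := by
    rw [Set.disjoint_left]
    rintro l ⟨hl, hlt⟩ ⟨⟨hB1, hB2⟩, hB3⟩
    obtain ⟨y', hy', rfl⟩ := hB1
    have h7 : a * (2 * x + 1) = a * (2 * x) + a := by ring
    have h2x : 2 * x < a + y' := by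
      by_contra hc
      push_neg at hc
      exact hB3 ⟨a + y', by omega, by linarith⟩
    have h4 : a * (2 * x) = 2 * a * x := by ring
    linarith
  -- cardinality of A
  have hA_eq : {l | l ∈ Lam a ∧ l < 2 * a * x + 2 * y}
      = ↑((Finset.range (2 * a * x + 2 * y)).filter (fun m => m ∈ Lam a)) := by
    ext l
    simp only [Set.mem_setOf_eq, Finset.coe_filter, Finset.mem_range]
    tauto
  have hAcard : {l | l ∈ Lam a ∧ l < 2 * a * x + 2 * y}.ncard
      = Nat.count (fun m => m ∈ Lam a) (2 * a * x + 2 * y) := by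
    rw [hA_eq, Set.ncard_coe_finset, Nat.count_eq_card_filter_range]
  have hfinA : {l | l ∈ Lam a ∧ l < 2 * a * x + 2 * y}.Finite := by
    rw [hA_eq]; exact Finset.finite_toSet _
  -- cardinality of B
  have hB_eq : ({l | l ∈ LamX a (2 * x + 1) ∧ l < a * (2 * x + 1) + y} \ LamX a (2 * x))
      = (fun v => a * (2 * x + 1) + v) '' Set.Ico (2 * x + 1 - a) y := by
    ext l
    constructor
    · rintro ⟨⟨hB1, hB2⟩, hB3⟩
      obtain ⟨y', hy', rfl⟩ := hB1
      have h7 : a * (2 * x + 1) = a * (2 * x) + a := by ring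
      have h2x : 2 * x < a + y' := by
        by_contra hc
        push_neg at hc
        exact hB3 ⟨a + y', by omega, by linarith⟩
      have hyy : y' < y := by linarith
      exact ⟨y', ⟨by omega, hyy⟩, rfl⟩
    · rintro ⟨v, ⟨hv1, hv2⟩, rfl⟩
      have h7 : a * (2 * x + 1) = a * (2 * x) + a := by ring
      refine ⟨⟨⟨v, by omega, rfl⟩, by linarith⟩, ?_⟩
      rintro ⟨w, hw, heq⟩
      have : w = a + v := by linarith
      omega
  have hBcard : ({l | l ∈ LamX a (2 * x + 1) ∧ l < a * (2 * x + 1) + y}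
      \ LamX a (2 * x)).ncard = y - (2 * x + 1 - a) := by
    rw [hB_eq, Set.ncard_image_of_injective _ (add_right_injective _),
      ← Finset.coe_Ico, Set.ncard_coe_finset, Nat.card_Ico]
  have hfinB : ({l | l ∈ LamX a (2 * x + 1) ∧ l < a * (2 * x + 1) + y}
      \ LamX a (2 * x)).Finite := by
    rw [hB_eq]; exact (Set.finite_Ico _ _).image _
  have hcardU : (Lam a \ S).ncard
      = Nat.count (fun m => m ∈ Lam a) (2 * a * x + 2 * y) + (y - (2 * x + 1 - a)) := by
    rw [hmain, Set.ncard_union_eq hdisj hfinA hfinB, hAcard, hBcard]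
  refine ⟨hmain, hdisj, ?_, ?_, ?_⟩
  · intro h2xa
    have hc := Stmt18Aux.count_tri (a := a) ha0 (show 2 * y ≤ 2 * x by omega)
      (show 2 * x < a from h2xa)
    rw [show a * (2 * x) + 2 * y = 2 * a * x + 2 * y from by ring] at hc
    have h3 : 2 * x * (2 * x + 1) + 2 * (2 * y) = (2 * x ^ 2 + x + 2 * y) * 2 := by ring
    have h4 : Nat.count (fun m => m ∈ Lam a) (2 * a * x + 2 * y) = 2 * x ^ 2 + x + 2 * y :=
      Nat.eq_of_mul_eq_mul_right (by norm_num) (hc.trans h3)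
    rw [hcardU, h4]
    generalize x ^ 2 = K
    omega
  · intro h2xa hy2
    have hcN : a * (a - 1) ≤ 2 * a * x + 2 * y := by
      have t1 : a * (a - 1) ≤ a * (2 * x) := Nat.mul_le_mul le_rfl (by omega)
      have t2 : a * (2 * x) = 2 * a * x := by ring
      linarith
    have hc := Stmt18Aux.count_big (a := a) ha0 (2 * a * x + 2 * y) hcN
    obtain ⟨k, hk⟩ := Nat.even_mul_succ_self (a - 1)
    have he : (a - 1) * (a - 1 + 1) = a * (a - 1) := by
      rw [show a - 1 + 1 = a from by omega]; ring
    have hk' : a * (a - 1) = k + k := by linarith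
    have e4 : a * (a - 1) + a = a * a := by
      calc a * (a - 1) + a = a * ((a - 1) + 1) := by ring
        _ = a * a := by rw [show a - 1 + 1 = a from by omega]
    have h3a : a * 3 ≤ a * (a - 1) := Nat.mul_le_mul le_rfl (by omega)
    rw [hcardU, pow_two]
    rw [hk'] at hc e4 h3a
    rw [show 2 * a * x + 2 * y = 2 * (a * x) + 2 * y from by ring] at hc ⊢
    rw [show 2 * a * x + 3 * y = 2 * (a * x) + 3 * y from by ring]
    generalize a * x = P at hc ⊢
    generalize a * a = Q at e4 ⊢
    omega
  · intro h2xa hy2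
    have hcN : a * (a - 1) ≤ 2 * a * x + 2 * y := by
      have t1 : a * (a - 1) ≤ a * (2 * x) := Nat.mul_le_mul le_rfl (by omega)
      have t2 : a * (2 * x) = 2 * a * x := by ring
      linarith
    have hc := Stmt18Aux.count_big (a := a) ha0 (2 * a * x + 2 * y) hcN
    obtain ⟨k, hk⟩ := Nat.even_mul_succ_self (a - 1)
    have he : (a - 1) * (a - 1 + 1) = a * (a - 1) := by
      rw [show a - 1 + 1 = a from by omega]; ring
    have hk' : a * (a - 1) = k + k := by linarith
    have e4 : a * (a - 1) + a = a * a := by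
      calc a * (a - 1) + a = a * ((a - 1) + 1) := by ring
        _ = a * a := by rw [show a - 1 + 1 = a from by omega]
    have h3a : a * 3 ≤ a * (a - 1) := Nat.mul_le_mul le_rfl (by omega)
    rw [hcardU, pow_two]
    rw [hk'] at hc e4 h3a
    rw [show 2 * a * x + 2 * y = 2 * (a * x) + 2 * y from by ring] at hc ⊢
    generalize a * x = P at hc ⊢
    generalize a * a = Q at e4 ⊢
    omega
end
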